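/- Main calibration theorem: with a faulty measurement of internal distribution P(e,u) applied to state ρ, define f_a(x) = E(a|ρ_x) p̃(x|ρ), g_a(x) = E(a; P_x) P(x) = Σ_e (-1)^{(e,S(a))} P(e,x), and h_a(b) = E(a+b|ρ). Then f_a = g_a * F^{-1}[h_a] (convolution on F_2^m), and hence, if h_a is nowhere zero, g_a = F^{-1}[F[f_a]/h_a]; explicitly, E(a;P_u)P(u) = 2^{-m} Σ_{b,x} (-1)^{(u+x)·b} E(a|ρ_x) p̃(x|ρ) / E(a+b|ρ). -/

import Mathlib

/-!
Expanding the syndrome projector in the stabilizer group, `π_y = 2⁻ᵐ Σ_b (-1)^{b·y} S(b)`, gives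
`S(b) π_y = (-1)^{b·y} π_y`; hence `π_y` is idempotent and
`tr(S(a) π_y ρ π_y) = 2⁻ᵐ Σ_b (-1)^{b·y} E(a+b|ρ)`. A Pauli error `e` commutes with `S(a)` up to
the sign `(-1)^{(e,S(a))}`, so `f_a` is the convolution of `g_a` with `2⁻ᵐ F[h_a]`. The
Hadamard-Walsh transform turns this convolution into the product `F[f_a] = F[g_a] · h_a`, which
can be divided by a nowhere vanishing `h_a` and transformed back.
-/

open Finset Matrix

def dotp {m : ℕ} (a x : Fin m → ZMod 2) : ZMod 2 := ∑ i, a i * x i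

/-- Syndrome projection `π_x = Π_i (Id + (-1)^{x_i} S_i)/2`. -/
noncomputable def proj {d : Type*} [Fintype d] [DecidableEq d] {m : ℕ}
    (S : Fin m → Matrix d d ℂ) (x : Fin m → ZMod 2) : Matrix d d ℂ :=
  (List.ofFn fun i => (2 : ℂ)⁻¹ • ((1 : Matrix d d ℂ) + ((-1 : ℂ) ^ (x i).val) • S i)).prod

/-- Stabilizer element `S(a) = Π_i S_i^{a_i}`. -/
noncomputable def Spow {d : Type*} [Fintype d] [DecidableEq d] {m : ℕ}
    (S : Fin m → Matrix d d ℂ) (a : Fin m → ZMod 2) : Matrix d d ℂ :=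
  (List.ofFn fun i => S i ^ (a i).val).prod

/-- `f_a(x) = E(a|ρ_x) p̃(x|ρ)`, the unnormalized post-measurement expectation of `S(a)`
for the faulty measurement with internal distribution `P` and Pauli errors `E`. -/
noncomputable def fA {d ι : Type*} [Fintype d] [DecidableEq d] [Fintype ι] {m : ℕ}
    (S : Fin m → Matrix d d ℂ) (E : ι → Matrix d d ℂ)
    (P : ι × (Fin m → ZMod 2) → ℝ) (ρ : Matrix d d ℂ)
    (a x : Fin m → ZMod 2) : ℂ :=
  ∑ p : ι × (Fin m → ZMod 2), (P p : ℂ) *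
    (Spow S a * (E p.1 * proj S (x + p.2) * ρ * proj S (x + p.2) * (E p.1)ᴴ)).trace

/-- `g_a(u) = E(a; P_u) P(u) = Σ_e (-1)^{(e,S(a))} P(e,u)`. -/
noncomputable def gA {ι : Type*} [Fintype ι] {m : ℕ}
    (pair : ι → (Fin m → ZMod 2) → ZMod 2)
    (P : ι × (Fin m → ZMod 2) → ℝ) (a u : Fin m → ZMod 2) : ℂ :=
  ∑ e : ι, ((-1 : ℂ) ^ (pair e a).val) * (P (e, u) : ℂ)

/-- `h_a(b) = E(a+b|ρ)`. -/
noncomputable def hA {d : Type*} [Fintype d] [DecidableEq d] {m : ℕ}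
    (S : Fin m → Matrix d d ℂ) (ρ : Matrix d d ℂ) (a b : Fin m → ZMod 2) : ℂ :=
  (Spow S (a + b) * ρ).trace

theorem pow_val_add_of_mul_self_eq_one {M : Type*} [Monoid M] {x : M} (hx : x * x = 1)
    (s t : ZMod 2) : x ^ (s + t).val = x ^ s.val * x ^ t.val := by
  rw [ZMod.val_add, ← pow_add, ← pow_eq_pow_mod _ ((sq x).trans hx)]

section SignCharacter

variable {R : Type*} [Ring R]

theorem neg_one_pow_val_add (s t : ZMod 2) :
    (-1 : R) ^ (s + t).val = (-1) ^ s.val * (-1) ^ t.val :=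
  pow_val_add_of_mul_self_eq_one (by rw [neg_mul_neg, one_mul]) s t

theorem neg_one_pow_val_mul_self (s : ZMod 2) : (-1 : R) ^ s.val * (-1) ^ s.val = 1 := by
  rw [← neg_one_pow_val_add, CharTwo.add_self_eq_zero, ZMod.val_zero, pow_zero]

end SignCharacter

section Dotp

variable {m : ℕ}

theorem dotp_eq_dotProduct (a x : Fin m → ZMod 2) : dotp a x = a ⬝ᵥ x := rfl

theorem dotp_add_left (a b c : Fin m → ZMod 2) : dotp (a + b) c = dotp a c + dotp b c :=
  add_dotProduct a b c

theorem dotp_add_right (a b c : Fin m → ZMod 2) : dotp a (b + c) = dotp a b + dotp a c :=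
  dotProduct_add a b c

theorem dotp_comm (a b : Fin m → ZMod 2) : dotp a b = dotp b a :=
  dotProduct_comm a b

theorem dotp_cons (c : ZMod 2) (b : Fin m → ZMod 2) (y : Fin (m + 1) → ZMod 2) :
    dotp (Fin.cons c b) y = c * y 0 + dotp b (Fin.tail y) := by
  simp [dotp, Fin.sum_univ_succ, Fin.tail]

theorem pi_zmod_two_add_eq_zero_iff {a b : Fin m → ZMod 2} : a + b = 0 ↔ a = b := by
  rw [add_eq_zero_iff_eq_neg, show -b = b from funext fun i => ZMod.neg_eq_self_mod_two (b i)]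

end Dotp

theorem sum_zmod_two {M : Type*} [AddCommMonoid M] (f : ZMod 2 → M) : ∑ c, f c = f 0 + f 1 :=
  Fin.sum_univ_two f

theorem sum_pi_fin_succ {M α : Type*} [AddCommMonoid M] [Fintype α] {m : ℕ}
    (F : (Fin (m + 1) → α) → M) : ∑ b, F b = ∑ c, ∑ b, F (Fin.cons c b) := by
  rw [← (Fin.consEquiv fun _ => α).sum_comp, Fintype.sum_prod_type]
  rfl

section Walsh

variable {K : Type*} [CommRing K] {m : ℕ}

/-- Unnormalised Hadamard-Walsh transform: the paper's `F⁻¹[h]` is `(2 ^ m)⁻¹ * walsh h`. -/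
def walsh (h : (Fin m → ZMod 2) → K) (x : Fin m → ZMod 2) : K :=
  ∑ b, (-1) ^ (dotp b x).val * h b

theorem sum_neg_one_pow_dotp [NoZeroDivisors K] [NeZero (2 : K)] (y : Fin m → ZMod 2) :
    ∑ x, (-1 : K) ^ (dotp x y).val = if y = 0 then 2 ^ m else 0 := by
  split_ifs with hy
  · simp [hy, dotp]
  obtain ⟨i, hi⟩ : ∃ i, y i ≠ 0 := by
    by_contra! h
    exact hy (funext h)
  -- translating by the `i`-th basis vector flips every sign
  have hflip : ∀ x, (-1 : K) ^ (dotp (x + Pi.single i 1) y).val = -(-1) ^ (dotp x y).val := by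
    intro x
    have hyi : (dotp (Pi.single i 1) y).val = 1 := by
      rw [dotp_eq_dotProduct, single_dotProduct, one_mul]
      revert hi
      generalize y i = c
      decide +revert
    rw [dotp_add_left, neg_one_pow_val_add, hyi, pow_one, mul_neg_one]
  have hs : ∑ x, (-1 : K) ^ (dotp x y).val = -∑ x, (-1 : K) ^ (dotp x y).val := by
    calc ∑ x, (-1 : K) ^ (dotp x y).val
        = ∑ x, (-1 : K) ^ (dotp (x + Pi.single i 1) y).val :=
          (Fintype.sum_equiv (Equiv.addRight (Pi.single i 1)) _ _ fun _ => rfl).symm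
      _ = -∑ x, (-1 : K) ^ (dotp x y).val := by simp_rw [hflip, sum_neg_distrib]
  have h2s : 2 * ∑ x, (-1 : K) ^ (dotp x y).val = 0 := by linear_combination hs
  exact (mul_eq_zero.1 h2s).resolve_left two_ne_zero

theorem walsh_walsh [NoZeroDivisors K] [NeZero (2 : K)] (h : (Fin m → ZMod 2) → K)
    (x : Fin m → ZMod 2) : walsh (walsh h) x = 2 ^ m * h x := by
  have hcol : ∀ c, ∑ b, (-1 : K) ^ (dotp b x).val * ((-1) ^ (dotp c b).val * h c)
      = if c = x then 2 ^ m * h x else 0 := by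
    intro c
    simp_rw [← mul_assoc, ← sum_mul, dotp_comm c, ← neg_one_pow_val_add, ← dotp_add_right,
      sum_neg_one_pow_dotp, pi_zmod_two_add_eq_zero_iff, eq_comm (a := x)]
    split_ifs with hc <;> simp [hc]
  simp_rw [walsh, mul_sum]
  rw [sum_comm, sum_congr rfl fun c _ => hcol c, sum_ite_eq' univ x, if_pos (mem_univ x)]

theorem walsh_const_mul (c : K) (h : (Fin m → ZMod 2) → K) (x : Fin m → ZMod 2) :
    walsh (fun y => c * h y) x = c * walsh h x := by
  simp_rw [walsh, mul_sum, mul_left_comm]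

theorem walsh_conv (g k : (Fin m → ZMod 2) → K) (b : Fin m → ZMod 2) :
    walsh (fun x => ∑ u, g u * k (x + u)) b = walsh g b * walsh k b := by
  have hshift : ∀ u, ∑ x, (-1 : K) ^ (dotp x b).val * k (x + u)
      = (-1) ^ (dotp u b).val * walsh k b := by
    intro u
    rw [walsh, mul_sum]
    refine Fintype.sum_equiv (Equiv.addRight u) _ _ fun x => ?_
    simp only [Equiv.coe_addRight, dotp_add_left, neg_one_pow_val_add]
    linear_combination
      (-(-1 : K) ^ (dotp x b).val * k (x + u)) * neg_one_pow_val_mul_self (R := K) (dotp u b)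
  calc walsh (fun x => ∑ u, g u * k (x + u)) b
      = ∑ u, g u * ∑ x, (-1 : K) ^ (dotp x b).val * k (x + u) := by
        simp_rw [walsh, mul_sum, mul_left_comm ((-1 : K) ^ _)]
        exact sum_comm
    _ = walsh g b * walsh k b := by
        simp_rw [hshift, walsh, sum_mul]
        exact sum_congr rfl fun u _ => by ring

end Walsh

theorem eq_inv_walsh_div_of_eq_conv {K : Type*} [Field K] [NeZero (2 : K)] {m : ℕ}
    {f g h : (Fin m → ZMod 2) → K} (hh : ∀ b, h b ≠ 0)
    (hf : ∀ x, f x = ∑ u, g u * ((2 ^ m)⁻¹ * walsh h (x + u))) (u : Fin m → ZMod 2) :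
    g u = (2 ^ m)⁻¹ * ∑ b, ∑ x, (-1) ^ (dotp (u + x) b).val * f x / h b := by
  have hfg : ∀ b, walsh f b / h b = walsh g b := by
    intro b
    rw [funext hf, walsh_conv g fun y => (2 ^ m)⁻¹ * walsh h y, walsh_const_mul, walsh_walsh,
      inv_mul_cancel_left₀ (pow_ne_zero _ two_ne_zero), mul_div_cancel_right₀ _ (hh b)]
  calc g u = (2 ^ m)⁻¹ * walsh (walsh g) u := by
        rw [walsh_walsh, inv_mul_cancel_left₀ (pow_ne_zero _ two_ne_zero)]
    _ = (2 ^ m)⁻¹ * ∑ b, (-1) ^ (dotp u b).val * (walsh f b / h b) := by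
        simp_rw [hfg, walsh, dotp_comm u]
    _ = (2 ^ m)⁻¹ * ∑ b, ∑ x, (-1) ^ (dotp (u + x) b).val * f x / h b := by
        simp_rw [walsh, sum_div, mul_sum, dotp_add_left, neg_one_pow_val_add, mul_assoc,
          mul_div_assoc]

section Stabilizer

variable {d : Type*} [Fintype d] [DecidableEq d] {m : ℕ}

theorem Spow_succ (S : Fin (m + 1) → Matrix d d ℂ) (a : Fin (m + 1) → ZMod 2) :
    Spow S a = S 0 ^ (a 0).val * Spow (Fin.tail S) (Fin.tail a) := by
  simp [Spow, List.ofFn_succ, Fin.tail]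

theorem proj_succ (S : Fin (m + 1) → Matrix d d ℂ) (y : Fin (m + 1) → ZMod 2) :
    proj S y = (2⁻¹ : ℂ) • (1 + (-1 : ℂ) ^ (y 0).val • S 0) * proj (Fin.tail S) (Fin.tail y) := by
  simp [proj, List.ofFn_succ, Fin.tail]

theorem commute_Spow {A : Matrix d d ℂ} {S : Fin m → Matrix d d ℂ} (hA : ∀ i, Commute A (S i))
    (b : Fin m → ZMod 2) : Commute A (Spow S b) :=
  Commute.list_prod_right _ _ fun _ hx => by
    obtain ⟨i, rfl⟩ := List.mem_ofFn.1 hx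
    exact (hA i).pow_right _

theorem proj_eq_sum (S : Fin m → Matrix d d ℂ) (y : Fin m → ZMod 2) :
    proj S y = ((2 : ℂ) ^ m)⁻¹ • ∑ b, (-1 : ℂ) ^ (dotp b y).val • Spow S b := by
  induction m with
  | zero => simp [proj, Spow, dotp]
  | succ n ih =>
    rw [proj_succ, ih, sum_pi_fin_succ, sum_zmod_two]
    simp only [Spow_succ, Fin.cons_zero, Fin.tail_cons, dotp_cons, zero_mul, zero_add,
      ZMod.val_zero, pow_zero, one_mul, neg_one_pow_val_add, ZMod.val_one, pow_one, mul_smul,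
      ← smul_sum, ← mul_smul_comm, ← Matrix.mul_sum]
    rw [smul_mul_assoc, mul_smul_comm, add_mul, one_mul, smul_mul_assoc, smul_smul, ← mul_inv,
      ← pow_succ', mul_smul_comm]

theorem Spow_add {S : Fin m → Matrix d d ℂ} (hcomm : ∀ i j, Commute (S i) (S j))
    (hinv : ∀ i, S i * S i = 1) (a b : Fin m → ZMod 2) :
    Spow S (a + b) = Spow S a * Spow S b := by
  induction m with
  | zero => simp [Spow]
  | succ n ih =>
    have hswap : Commute (S 0 ^ (b 0).val) (Spow (Fin.tail S) (Fin.tail a)) :=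
      (commute_Spow (fun i => hcomm 0 i.succ) _).pow_left _
    rw [Spow_succ S, Spow_succ S a, Spow_succ S b, Pi.add_apply,
      pow_val_add_of_mul_self_eq_one (hinv 0),
      show Fin.tail (a + b) = Fin.tail a + Fin.tail b from rfl,
      ih (S := Fin.tail S) (fun i j => hcomm i.succ j.succ) (fun i => hinv i.succ), mul_assoc,
      ← mul_assoc (S 0 ^ (b 0).val), hswap.eq]
    simp only [mul_assoc]

variable {S : Fin m → Matrix d d ℂ} (hcomm : ∀ i j, Commute (S i) (S j))
  (hinv : ∀ i, S i * S i = 1)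
include hcomm hinv

theorem Spow_mul_proj (b y : Fin m → ZMod 2) :
    Spow S b * proj S y = (-1 : ℂ) ^ (dotp b y).val • proj S y := by
  have hsign : ∀ c, (-1 : ℂ) ^ (dotp c y).val • Spow S (b + c)
      = (-1 : ℂ) ^ (dotp b y).val • ((-1 : ℂ) ^ (dotp (b + c) y).val • Spow S (b + c)) := by
    intro c
    rw [smul_smul, dotp_add_left, neg_one_pow_val_add, ← mul_assoc, neg_one_pow_val_mul_self,
      one_mul]
  calc Spow S b * proj S y
      = ((2 : ℂ) ^ m)⁻¹ • ∑ c, (-1 : ℂ) ^ (dotp c y).val • Spow S (b + c) := by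
        rw [proj_eq_sum, mul_smul_comm, Matrix.mul_sum]
        simp_rw [mul_smul_comm, Spow_add hcomm hinv]
    _ = (-1 : ℂ) ^ (dotp b y).val • proj S y := by
        simp_rw [hsign, ← smul_sum]
        rw [Fintype.sum_equiv (Equiv.addLeft b)
          (fun c => (-1 : ℂ) ^ (dotp (b + c) y).val • Spow S (b + c))
          (fun c => (-1 : ℂ) ^ (dotp c y).val • Spow S c) fun _ => rfl, smul_comm, ← proj_eq_sum]

theorem proj_mul_proj (y : Fin m → ZMod 2) : proj S y * proj S y = proj S y := by
  nth_rw 1 [proj_eq_sum S y]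
  simp_rw [smul_mul_assoc, Matrix.sum_mul, smul_mul_assoc, Spow_mul_proj hcomm hinv, smul_smul,
    neg_one_pow_val_mul_self, one_smul, sum_const, card_univ, Fintype.card_fun, ZMod.card,
    Fintype.card_fin]
  rw [← Nat.cast_smul_eq_nsmul ℂ, smul_smul, Nat.cast_pow, Nat.cast_ofNat,
    inv_mul_cancel₀ (pow_ne_zero _ two_ne_zero), one_smul]

theorem proj_mul_Spow_mul_proj (a y : Fin m → ZMod 2) :
    proj S y * Spow S a * proj S y = Spow S a * proj S y := by
  rw [mul_assoc, Spow_mul_proj hcomm hinv, mul_smul_comm, proj_mul_proj hcomm hinv]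

theorem trace_Spow_mul_proj_mul (a y : Fin m → ZMod 2) (ρ : Matrix d d ℂ) :
    (Spow S a * proj S y * ρ).trace = ((2 : ℂ) ^ m)⁻¹ * walsh (hA S ρ a) y := by
  rw [proj_eq_sum, mul_smul_comm, smul_mul_assoc, trace_smul, smul_eq_mul, Matrix.mul_sum,
    Matrix.sum_mul, trace_sum]
  simp_rw [mul_smul_comm, smul_mul_assoc, trace_smul, smul_eq_mul, ← Spow_add hcomm hinv]
  rfl

theorem trace_Spow_mul_conj_proj {E : Matrix d d ℂ} {χ : ℂ} {a : Fin m → ZMod 2}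
    (hE : Eᴴ * Spow S a * E = χ • Spow S a) (y : Fin m → ZMod 2) (ρ : Matrix d d ℂ) :
    (Spow S a * (E * proj S y * ρ * proj S y * Eᴴ)).trace
      = χ * (((2 : ℂ) ^ m)⁻¹ * walsh (hA S ρ a) y) := by
  calc (Spow S a * (E * proj S y * ρ * proj S y * Eᴴ)).trace
      = (Eᴴ * Spow S a * E * (proj S y * ρ * proj S y)).trace := by
        rw [show Spow S a * (E * proj S y * ρ * proj S y * Eᴴ)
            = Spow S a * E * (proj S y * ρ * proj S y) * Eᴴ by simp only [mul_assoc],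
          trace_mul_comm]
        simp only [mul_assoc]
    _ = χ * (proj S y * Spow S a * proj S y * ρ).trace := by
        rw [hE, smul_mul_assoc, trace_smul, smul_eq_mul,
          show Spow S a * (proj S y * ρ * proj S y) = Spow S a * proj S y * ρ * proj S y by
            simp only [mul_assoc],
          trace_mul_comm]
        simp only [mul_assoc]
    _ = χ * (((2 : ℂ) ^ m)⁻¹ * walsh (hA S ρ a) y) := by
        rw [proj_mul_Spow_mul_proj hcomm hinv, trace_Spow_mul_proj_mul hcomm hinv]

end Stabilizer

theorem fA_eq_conv {d ι : Type*} [Fintype d] [DecidableEq d] [Fintype ι] {m : ℕ}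
    {S : Fin m → Matrix d d ℂ} (hcomm : ∀ i j, Commute (S i) (S j)) (hinv : ∀ i, S i * S i = 1)
    {E : ι → Matrix d d ℂ} {pair : ι → (Fin m → ZMod 2) → ZMod 2} {a : Fin m → ZMod 2}
    (hconj : ∀ e, (E e)ᴴ * Spow S a * E e = (-1 : ℂ) ^ (pair e a).val • Spow S a)
    (P : ι × (Fin m → ZMod 2) → ℝ) (ρ : Matrix d d ℂ) (x : Fin m → ZMod 2) :
    fA S E P ρ a x = ∑ u, gA pair P a u * (((2 : ℂ) ^ m)⁻¹ * walsh (hA S ρ a) (x + u)) := by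
  rw [fA, Fintype.sum_prod_type, sum_comm]
  refine sum_congr rfl fun u _ => ?_
  rw [gA, sum_mul]
  refine sum_congr rfl fun e _ => ?_
  rw [trace_Spow_mul_conj_proj hcomm hinv (hconj e)]
  ring

theorem calibration_main_general {d ι : Type*} [Fintype d] [DecidableEq d] [Fintype ι] {m : ℕ}
    (S : Fin m → Matrix d d ℂ)
    (hcomm : ∀ i j, S i * S j = S j * S i)
    (hinv : ∀ i, S i * S i = 1)
    (E : ι → Matrix d d ℂ)
    (pair : ι → (Fin m → ZMod 2) → ZMod 2)
    (hconj : ∀ (e : ι) (b : Fin m → ZMod 2),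
      (E e)ᴴ * Spow S b * E e = ((-1 : ℂ) ^ (pair e b).val) • Spow S b)
    (P : ι × (Fin m → ZMod 2) → ℝ)
    (ρ : Matrix d d ℂ) (a : Fin m → ZMod 2) :
    (∀ x : Fin m → ZMod 2,
      fA S E P ρ a x = ∑ u, gA pair P a u *
        (((2 : ℂ) ^ m)⁻¹ * ∑ b, ((-1 : ℂ) ^ (dotp b (x + u)).val) * hA S ρ a b)) ∧
    ((∀ b, hA S ρ a b ≠ 0) → ∀ u : Fin m → ZMod 2,
      gA pair P a u = ((2 : ℂ) ^ m)⁻¹ *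
        ∑ b, ∑ x, ((-1 : ℂ) ^ (dotp (u + x) b).val) * fA S E P ρ a x / hA S ρ a b) := by
  have hconv := fA_eq_conv hcomm hinv (fun e => hconj e a) P ρ
  exact ⟨hconv, fun hh => eq_inv_walsh_div_of_eq_conv hh hconv⟩

/-- Main calibration theorem: `f_a = g_a * F⁻¹[h_a]` (convolution on `F_2^m`), and for
nowhere vanishing `h_a` the explicit inversion formula
`E(a;P_u)P(u) = 2^{-m} Σ_{b,x} (-1)^{(u+x)·b} E(a|ρ_x) p̃(x|ρ) / E(a+b|ρ)` holds. -/
theorem calibration_main {d ι : Type*} [Fintype d] [DecidableEq d] [Fintype ι] {m : ℕ}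
    (S : Fin m → Matrix d d ℂ)
    (hcomm : ∀ i j, S i * S j = S j * S i)
    (hinv : ∀ i, S i * S i = 1)
    (E : ι → Matrix d d ℂ)
    (pair : ι → (Fin m → ZMod 2) → ZMod 2)
    (hconj : ∀ (e : ι) (b : Fin m → ZMod 2),
      (E e)ᴴ * Spow S b * E e = ((-1 : ℂ) ^ (pair e b).val) • Spow S b)
    (P : ι × (Fin m → ZMod 2) → ℝ) (hPnn : ∀ p, 0 ≤ P p) (hPsum : ∑ p, P p = 1)
    (ρ : Matrix d d ℂ) (a : Fin m → ZMod 2) :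
    (∀ x : Fin m → ZMod 2,
      fA S E P ρ a x = ∑ u, gA pair P a u *
        (((2 : ℂ) ^ m)⁻¹ * ∑ b, ((-1 : ℂ) ^ (dotp b (x + u)).val) * hA S ρ a b)) ∧
    ((∀ b, hA S ρ a b ≠ 0) → ∀ u : Fin m → ZMod 2,
      gA pair P a u = ((2 : ℂ) ^ m)⁻¹ *
        ∑ b, ∑ x, ((-1 : ℂ) ^ (dotp (u + x) b).val) * fA S E P ρ a x / hA S ρ a b) :=
  calibration_main_general S hcomm hinv E pair hconj P ρ a
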